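/- For natural numbers b, c, N with N ≤ b and N ≤ c, and any natural number a, the sequence k ↦ T_k = Σ_{i=0}^N C(b,i) C(c,N-i) C(a+b+c-i, k) is log-concave: T_k^2 ≥ T_{k-1} T_{k+1} for all k ≥ 1. -/

import Mathlib

/-!
`∑ T_k x^k = (1 + x)^(a+c) · ∑_i C(b,i) C(c,N-i) (1 + x)^(b-i)`, and by Vandermonde's identity the
second factor has coefficients `R_k = C(b,k) · C(b+c-k, N)`. Both factors of `R_k` are log-concave
in `k` without internal zeros, hence so is `R`, and multiplication by `1 + x` preserves these two
properties.
-/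

open Finset

def IsLogConcave (u : ℕ → ℕ) : Prop :=
  ∀ k, u k * u (k + 2) ≤ u (k + 1) ^ 2

def HasInitialSupport (u : ℕ → ℕ) : Prop :=
  ∀ k, u (k + 1) ≠ 0 → u k ≠ 0

/-- The coefficient sequence of `(1 + x) · ∑ u k x^k`. -/
def pascalStep (u : ℕ → ℕ) : ℕ → ℕ
  | 0 => u 0
  | k + 1 => u (k + 1) + u k

section LogConcave

variable {u v : ℕ → ℕ}

theorem isLogConcave_of_mul_succ_eq {α β : ℕ → ℕ} (hα : ∀ k, 0 < α k)
    (hrec : ∀ k, u (k + 1) * α k = u k * β k)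
    (hratio : ∀ k, α k * β (k + 1) ≤ β k * α (k + 1)) : IsLogConcave u := by
  intro k
  refine Nat.le_of_mul_le_mul_right ?_ (Nat.mul_pos (hα k) (hα (k + 1)))
  calc u k * u (k + 2) * (α k * α (k + 1))
      = u k * α k * (u (k + 2) * α (k + 1)) := by ring
    _ = u k * u (k + 1) * (α k * β (k + 1)) := by rw [hrec]; ring
    _ ≤ u k * u (k + 1) * (β k * α (k + 1)) := Nat.mul_le_mul_left _ (hratio k)
    _ = u k * β k * (u (k + 1) * α (k + 1)) := by ring
    _ = u (k + 1) ^ 2 * (α k * α (k + 1)) := by rw [← hrec]; ring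

theorem IsLogConcave.mul (hu : IsLogConcave u) (hv : IsLogConcave v) : IsLogConcave (u * v) := by
  intro k
  calc u k * v k * (u (k + 2) * v (k + 2)) = u k * u (k + 2) * (v k * v (k + 2)) := by ring
    _ ≤ u (k + 1) ^ 2 * v (k + 1) ^ 2 := Nat.mul_le_mul (hu k) (hv k)
    _ = (u (k + 1) * v (k + 1)) ^ 2 := by ring

theorem HasInitialSupport.mul (hu : HasInitialSupport u) (hv : HasInitialSupport v) :
    HasInitialSupport (u * v) := by
  intro k h
  simp only [Pi.mul_apply, ne_eq, mul_eq_zero, not_or] at h ⊢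
  exact ⟨hu k h.1, hv k h.2⟩

theorem IsLogConcave.mul_add_three_le (hu : IsLogConcave u) (hs : HasInitialSupport u) (k : ℕ) :
    u k * u (k + 3) ≤ u (k + 1) * u (k + 2) := by
  rcases Nat.eq_zero_or_pos (u (k + 3)) with h3 | h3
  · simp [h3]
  have h2 : 0 < u (k + 2) := Nat.pos_of_ne_zero (hs _ h3.ne')
  have h1 : 0 < u (k + 1) := Nat.pos_of_ne_zero (hs _ h2.ne')
  refine Nat.le_of_mul_le_mul_right ?_ (Nat.mul_pos h1 h2)
  calc u k * u (k + 3) * (u (k + 1) * u (k + 2))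
      = u k * u (k + 2) * (u (k + 1) * u (k + 3)) := by ring
    _ ≤ u (k + 1) ^ 2 * u (k + 2) ^ 2 := Nat.mul_le_mul (hu k) (hu (k + 1))
    _ = u (k + 1) * u (k + 2) * (u (k + 1) * u (k + 2)) := by ring

theorem le_pascalStep (u : ℕ → ℕ) (k : ℕ) : u k ≤ pascalStep u k := by
  cases k <;> simp [pascalStep]

theorem HasInitialSupport.pascalStep (hs : HasInitialSupport u) :
    HasInitialSupport (pascalStep u) := by
  intro k h
  have hk : u k ≠ 0 := by
    by_contra hk
    have hk' : u (k + 1) = 0 := by_contra fun h' => hs k h' hk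
    simp [_root_.pascalStep, hk, hk'] at h
  exact ((Nat.pos_of_ne_zero hk).trans_le (le_pascalStep u k)).ne'

theorem IsLogConcave.pascalStep (hu : IsLogConcave u) (hs : HasInitialSupport u) :
    IsLogConcave (pascalStep u) := by
  rintro (_ | k)
  · show u 0 * (u 2 + u 1) ≤ (u 1 + u 0) ^ 2
    nlinarith [hu 0]
  · show (u (k + 1) + u k) * (u (k + 3) + u (k + 2)) ≤ (u (k + 2) + u (k + 1)) ^ 2
    nlinarith [hu k, hu (k + 1), hu.mul_add_three_le hs k]

theorem HasInitialSupport.iterate_pascalStep (hs : HasInitialSupport u) (m : ℕ) :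
    HasInitialSupport (_root_.pascalStep^[m] u) := by
  induction m with
  | zero => exact hs
  | succ m ih => rw [Function.iterate_succ_apply']; exact ih.pascalStep

theorem IsLogConcave.iterate_pascalStep (hu : IsLogConcave u) (hs : HasInitialSupport u)
    (m : ℕ) : IsLogConcave (_root_.pascalStep^[m] u) := by
  induction m with
  | zero => exact hu
  | succ m ih => rw [Function.iterate_succ_apply']; exact ih.pascalStep (hs.iterate_pascalStep m)

end LogConcave

theorem pascalStep_sum_mul_choose {ι : Type*} (s : Finset ι) (w n : ι → ℕ) :
    pascalStep (fun k => ∑ i ∈ s, w i * (n i).choose k) =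
      fun k => ∑ i ∈ s, w i * (n i + 1).choose k := by
  funext k
  cases k with
  | zero => simp [pascalStep]
  | succ k => simp only [pascalStep, Nat.choose_succ_succ', mul_add, sum_add_distrib, add_comm]

theorem iterate_pascalStep_sum_mul_choose {ι : Type*} (s : Finset ι) (w n : ι → ℕ) (m : ℕ) :
    pascalStep^[m] (fun k => ∑ i ∈ s, w i * (n i).choose k) =
      fun k => ∑ i ∈ s, w i * (n i + m).choose k := by
  induction m with
  | zero => rfl
  | succ m ih => rw [Function.iterate_succ_apply', ih, pascalStep_sum_mul_choose]; rfl

theorem isLogConcave_choose (n : ℕ) : IsLogConcave n.choose := by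
  refine isLogConcave_of_mul_succ_eq (α := (· + 1)) (β := (n - ·)) (fun _ => Nat.succ_pos _)
    (Nat.choose_succ_right_eq n) fun k => ?_
  rcases Nat.lt_or_ge k n with hk | hk
  · obtain ⟨p, rfl⟩ := Nat.exists_eq_add_of_lt hk
    simp only [show k + p + 1 - (k + 1) = p by omega, show k + p + 1 - k = p + 1 by omega]
    nlinarith
  · simp [Nat.sub_eq_zero_of_le (Nat.le_succ_of_le hk)]

theorem hasInitialSupport_choose (n : ℕ) : HasInitialSupport n.choose := by
  intro k
  simp only [ne_eq, Nat.choose_eq_zero_iff, not_lt]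
  omega

theorem isLogConcave_choose_left (N : ℕ) : IsLogConcave (·.choose N) := by
  intro m
  rcases Nat.lt_or_ge m N with hm | hm
  · simp [Nat.choose_eq_zero_of_lt hm]
  obtain ⟨j, rfl⟩ := Nat.exists_eq_add_of_le hm
  refine isLogConcave_of_mul_succ_eq (u := fun j => (N + j).choose N) (α := (· + 1))
    (β := (N + · + 1)) (fun _ => Nat.succ_pos _) (fun j => ?_) (fun j => by nlinarith) j
  have := Nat.choose_mul_succ_eq (N + j) N
  rw [show N + j + 1 - N = j + 1 by omega] at this
  exact this.symm

theorem isLogConcave_choose_sub (n N : ℕ) : IsLogConcave fun k => (n - k).choose N := by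
  intro k
  rcases le_or_gt (k + 2) n with hk | hk
  · obtain ⟨m, rfl⟩ := Nat.exists_eq_add_of_le hk
    simp only [show k + 2 + m - k = m + 2 by omega, show k + 2 + m - (k + 1) = m + 1 by omega,
      show k + 2 + m - (k + 2) = m by omega]
    rw [mul_comm]
    exact isLogConcave_choose_left N m
  · simp only [show n - (k + 1) = 0 by omega, show n - (k + 2) = 0 by omega]
    cases N <;> simp

theorem hasInitialSupport_choose_sub (n N : ℕ) : HasInitialSupport fun k => (n - k).choose N := by
  intro k
  simp only [ne_eq, Nat.choose_eq_zero_iff, not_lt]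
  omega

theorem choose_mul_choose_sub_comm (n i k : ℕ) :
    n.choose i * (n - i).choose k = n.choose k * (n - k).choose i := by
  have h₁ := Nat.choose_mul (n := n) (k := i + k) (Nat.le_add_right i k)
  have h₂ := Nat.choose_mul (n := n) (k := i + k) (Nat.le_add_left k i)
  rw [Nat.add_sub_cancel_left] at h₁
  rw [Nat.add_sub_cancel, ← Nat.choose_symm_add] at h₂
  rw [← h₁, ← h₂]

theorem sum_choose_mul_choose_mul_choose_sub (b c N k : ℕ) :
    ∑ i ∈ range (N + 1), b.choose i * c.choose (N - i) * (b - i).choose k =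
      b.choose k * (b + c - k).choose N := by
  rcases le_or_gt k b with hk | hk
  · calc ∑ i ∈ range (N + 1), b.choose i * c.choose (N - i) * (b - i).choose k
        = b.choose k * ∑ i ∈ range (N + 1), (b - k).choose i * c.choose (N - i) := by
          rw [mul_sum]
          refine sum_congr rfl fun i _ => ?_
          rw [mul_right_comm, choose_mul_choose_sub_comm]
          ring
      _ = b.choose k * (b + c - k).choose N := by
          rw [show b + c - k = b - k + c by omega, Nat.add_choose_eq,
            Finset.Nat.sum_antidiagonal_eq_sum_range_succ_mk]
  · rw [Nat.choose_eq_zero_of_lt hk, zero_mul]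
    exact sum_eq_zero fun i _ => by
      rw [Nat.choose_eq_zero_of_lt (lt_of_le_of_lt (Nat.sub_le b i) hk), mul_zero]

theorem T_log_concave_general (a b c N : ℕ) :
    ∀ k, 1 ≤ k →
      (∑ i ∈ Finset.range (N + 1), b.choose i * c.choose (N - i) * (a + b + c - i).choose k) ^ 2 ≥
        (∑ i ∈ Finset.range (N + 1),
            b.choose i * c.choose (N - i) * (a + b + c - i).choose (k - 1)) *
        (∑ i ∈ Finset.range (N + 1),
            b.choose i * c.choose (N - i) * (a + b + c - i).choose (k + 1)) := by
  have hR : (b.choose * fun k => (b + c - k).choose N) =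
      fun k => ∑ i ∈ range (N + 1), b.choose i * c.choose (N - i) * (b - i).choose k :=
    funext fun k => (sum_choose_mul_choose_mul_choose_sub b c N k).symm
  have hT : pascalStep^[a + c] (b.choose * fun k => (b + c - k).choose N) =
      fun k => ∑ i ∈ range (N + 1), b.choose i * c.choose (N - i) * (a + b + c - i).choose k := by
    rw [hR, iterate_pascalStep_sum_mul_choose]
    funext k
    refine sum_congr rfl fun i _ => ?_
    rcases le_or_gt i b with hi | hi
    · rw [show b - i + (a + c) = a + b + c - i by omega]
    · simp [Nat.choose_eq_zero_of_lt hi]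
  have hlc := ((isLogConcave_choose b).mul (isLogConcave_choose_sub (b + c) N)).iterate_pascalStep
    ((hasInitialSupport_choose b).mul (hasInitialSupport_choose_sub (b + c) N)) (a + c)
  rw [hT] at hlc
  intro k hk
  obtain ⟨j, rfl⟩ := Nat.exists_eq_add_of_le' hk
  exact hlc j

theorem T_log_concave (a b c N : ℕ) (hNb : N ≤ b) (hNc : N ≤ c) :
    ∀ k, 1 ≤ k →
      (∑ i ∈ Finset.range (N + 1), b.choose i * c.choose (N - i) * (a + b + c - i).choose k) ^ 2 ≥
        (∑ i ∈ Finset.range (N + 1),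
            b.choose i * c.choose (N - i) * (a + b + c - i).choose (k - 1)) *
        (∑ i ∈ Finset.range (N + 1),
            b.choose i * c.choose (N - i) * (a + b + c - i).choose (k + 1)) :=
  T_log_concave_general a b c N
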